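/- arXiv:1405.3466 — 2 statements merged into one kernel-verified Lean document; each statement's English description precedes it below -/
import Mathlib

section
/- Let f(U) = U − 4GM·ln(−U/2) for U < 0 with GM > 0 and κ = 1/(4GM). Then its functional inverse satisfies f⁻¹(u) ~ −2e^{−κu} as u → +∞; precisely, lim_{u→∞} f⁻¹(u)·e^{κu} = −2. -/
/-- The inverse of `f(U) = U - 4GM ln(-U/2)` (defined on `U < 0`) satisfies
`f⁻¹(u) ~ -2 e^{-κu}` as `u → +∞`, where `κ = 1/(4GM)`:
`f⁻¹(u) · e^{κu} → -2`. -/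
theorem collapse_redshift_asymptotics (GM : ℝ) (hGM : 0 < GM)
    (κ : ℝ) (hκ : κ = 1 / (4 * GM))
    (g : ℝ → ℝ) (hg_neg : ∀ u, g u < 0)
    (hg_inv : ∀ u, g u - 4 * GM * Real.log (-(g u) / 2) = u) :
    Filter.Tendsto (fun u : ℝ => g u * Real.exp (κ * u)) Filter.atTop (nhds (-2)) := by
  have hκpos : 0 < κ := by rw [hκ]; positivity
  have h4 : 4 * GM * κ = 1 := by rw [hκ]; field_simp
  have hg0 : Filter.Tendsto g Filter.atTop (nhds 0) := by
    rw [Metric.tendsto_atTop]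
    intro ε hε
    refine ⟨-(4 * GM * Real.log (ε / 2)) + 1, fun u hu => ?_⟩
    rw [Real.dist_eq, sub_zero]
    by_contra h
    push_neg at h
    have hgu := hg_neg u
    have habs : |g u| = -(g u) := abs_of_neg hgu
    rw [habs] at h
    have hlog : Real.log (ε / 2) ≤ Real.log (-(g u) / 2) :=
      Real.log_le_log (by linarith) (by linarith)
    have hu' : u ≤ -(4 * GM * Real.log (ε / 2)) := by
      rw [← hg_inv u]; nlinarith
    linarith
  have hEq : ∀ u, g u * Real.exp (κ * u) = -2 * Real.exp (κ * g u) := by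
    intro u
    have hgu := hg_neg u
    have hku : κ * u = κ * g u - Real.log (-(g u) / 2) := by
      have h := hg_inv u
      have h2 : κ * u = κ * g u - 4 * GM * κ * Real.log (-(g u) / 2) := by
        linear_combination (-κ) * h
      rw [h2, h4, one_mul]
    have hexp : Real.exp (κ * u) = Real.exp (κ * g u) / (-(g u) / 2) := by
      rw [hku, Real.exp_sub, Real.exp_log (by linarith : (0:ℝ) < -(g u) / 2)]
    rw [hexp]
    have hne : g u ≠ 0 := ne_of_lt hgu
    field_simp
  have hlim : Filter.Tendsto (fun u : ℝ => -2 * Real.exp (κ * g u)) Filter.atTop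
      (nhds (-2)) := by
    have h1 : Filter.Tendsto (fun u : ℝ => κ * g u) Filter.atTop (nhds 0) := by
      have := hg0.const_mul κ
      simpa using this
    have h2 := (Real.continuous_exp.tendsto 0).comp h1
    have h3 := h2.const_mul (-2 : ℝ)
    simpa using h3
  exact hlim.congr fun u => (hEq u).symm
end

section
/- Let κ > 0, m > 0, D > 0 and define the limit as ω → 0⁺ of the phase e^{iδ_Refl} (as defined with ϖ = ω/(2κ), Ω̄₊ = √(m²D + ω²)/(2κ)): then lim_{ω→0⁺} e^{iδ_Refl} = −1. -/
open Complex Filter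

private lemma gamma_tendsto_aux {f : ℝ → ℂ} {s : ℂ} (hs : 0 < s.re)
    (hf : Filter.Tendsto f (nhdsWithin 0 (Set.Ioi 0)) (nhds s)) :
    Filter.Tendsto (fun ω => Complex.Gamma (f ω)) (nhdsWithin 0 (Set.Ioi 0))
      (nhds (Complex.Gamma s)) := by
  have hne : ∀ n : ℕ, s ≠ -n := by
    intro n h
    rw [h] at hs
    simp at hs
    have : (0:ℝ) ≤ n := Nat.cast_nonneg n
    linarith
  exact (Complex.differentiableAt_Gamma s hne).continuousAt.tendsto.comp hf

/-- The low-frequency limit of the reflection phase: `e^{iδ_Refl} → -1` as `ω → 0⁺`. -/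
theorem reflection_phase_zero_limit (κ m D : ℝ) (hκ : 0 < κ) (hm : 0 < m) (hD : 0 < D) :
    Filter.Tendsto (fun ω : ℝ =>
        (Complex.Gamma (2 * Complex.I * (ω / (2 * κ))) *
            Complex.Gamma (1 - Complex.I * (ω / (2 * κ)) +
              Complex.I * (Real.sqrt (m ^ 2 * D + ω ^ 2) / (2 * κ))) *
            Complex.Gamma (1 - Complex.I * (ω / (2 * κ)) -
              Complex.I * (Real.sqrt (m ^ 2 * D + ω ^ 2) / (2 * κ)))) /
          (Complex.Gamma (-(2 * Complex.I * (ω / (2 * κ)))) *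
            Complex.Gamma (1 + Complex.I * (ω / (2 * κ)) -
              Complex.I * (Real.sqrt (m ^ 2 * D + ω ^ 2) / (2 * κ))) *
            Complex.Gamma (1 + Complex.I * (ω / (2 * κ)) +
              Complex.I * (Real.sqrt (m ^ 2 * D + ω ^ 2) / (2 * κ)))) *
          Complex.exp (2 * Complex.I * (ω / (2 * κ)) * Real.log D))
      (nhdsWithin 0 (Set.Ioi 0)) (nhds (-1 : ℂ)) := by
  have hκ0 : (κ:ℂ) ≠ 0 := Complex.ofReal_ne_zero.mpr hκ.ne'
  set S : ℂ := (Real.sqrt (m ^ 2 * D) : ℂ) / (2 * κ) with hSdef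
  obtain ⟨r, hr⟩ : ∃ r : ℝ, S = (r : ℂ) :=
    ⟨Real.sqrt (m ^ 2 * D) / (2 * κ), by push_cast [hSdef]; ring⟩
  have hre_plus : (0:ℝ) < (1 + Complex.I * S).re := by
    simp [hr, Complex.add_re, Complex.mul_re]
  have hre_minus : (0:ℝ) < (1 - Complex.I * S).re := by
    simp [hr, Complex.sub_re, Complex.mul_re]
  -- continuity of inner real maps
  have hcont1 : Filter.Tendsto (fun ω : ℝ => ((ω : ℂ) / (2 * κ)))
      (nhdsWithin 0 (Set.Ioi 0)) (nhds 0) := by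
    have : Continuous fun ω : ℝ => ((ω : ℂ) / (2 * κ)) := by fun_prop
    have h := this.tendsto 0
    simpa using h.mono_left nhdsWithin_le_nhds
  have hcont2 : Filter.Tendsto (fun ω : ℝ => ((Real.sqrt (m ^ 2 * D + ω ^ 2) : ℂ) / (2 * κ)))
      (nhdsWithin 0 (Set.Ioi 0)) (nhds S) := by
    have : Continuous fun ω : ℝ => ((Real.sqrt (m ^ 2 * D + ω ^ 2) : ℂ) / (2 * κ)) := by
      fun_prop
    have h := this.tendsto 0
    simp only [ne_eq, OfNat.ofNat_ne_zero, not_false_eq_true, zero_pow, add_zero] at h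
    exact h.mono_left nhdsWithin_le_nhds
  -- tendsto of each Gamma factor
  have hg1 : Filter.Tendsto (fun ω : ℝ => Complex.Gamma (1 + 2 * Complex.I * ((ω:ℂ) / (2 * κ))))
      (nhdsWithin 0 (Set.Ioi 0)) (nhds 1) := by
    have : Filter.Tendsto (fun ω : ℝ => (1 : ℂ) + 2 * Complex.I * ((ω:ℂ) / (2 * κ)))
        (nhdsWithin 0 (Set.Ioi 0)) (nhds 1) := by
      have := ((tendsto_const_nhds (x := (2 * Complex.I : ℂ))).mul hcont1).const_add 1
      simpa using this
    simpa [Complex.Gamma_one] using gamma_tendsto_aux (s := 1) (by norm_num) this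
  have hg2 : Filter.Tendsto (fun ω : ℝ =>
      Complex.Gamma (1 - Complex.I * ((ω:ℂ) / (2 * κ)) +
        Complex.I * ((Real.sqrt (m ^ 2 * D + ω ^ 2) : ℂ) / (2 * κ))))
      (nhdsWithin 0 (Set.Ioi 0)) (nhds (Complex.Gamma (1 + Complex.I * S))) := by
    apply gamma_tendsto_aux hre_plus
    have := ((Filter.Tendsto.const_mul (Complex.I) hcont1).const_sub 1).add
      (Filter.Tendsto.const_mul (Complex.I) hcont2)
    simpa using this
  have hg3 : Filter.Tendsto (fun ω : ℝ =>
      Complex.Gamma (1 - Complex.I * ((ω:ℂ) / (2 * κ)) -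
        Complex.I * ((Real.sqrt (m ^ 2 * D + ω ^ 2) : ℂ) / (2 * κ))))
      (nhdsWithin 0 (Set.Ioi 0)) (nhds (Complex.Gamma (1 - Complex.I * S))) := by
    apply gamma_tendsto_aux hre_minus
    have := ((Filter.Tendsto.const_mul (Complex.I) hcont1).const_sub 1).sub
      (Filter.Tendsto.const_mul (Complex.I) hcont2)
    simpa using this
  have hg4 : Filter.Tendsto (fun ω : ℝ => Complex.Gamma (1 - 2 * Complex.I * ((ω:ℂ) / (2 * κ))))
      (nhdsWithin 0 (Set.Ioi 0)) (nhds 1) := by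
    have : Filter.Tendsto (fun ω : ℝ => (1 : ℂ) - 2 * Complex.I * ((ω:ℂ) / (2 * κ)))
        (nhdsWithin 0 (Set.Ioi 0)) (nhds 1) := by
      have := ((tendsto_const_nhds (x := (2 * Complex.I : ℂ))).mul hcont1).const_sub 1
      simpa using this
    simpa [Complex.Gamma_one] using gamma_tendsto_aux (s := 1) (by norm_num) this
  have hg5 : Filter.Tendsto (fun ω : ℝ =>
      Complex.Gamma (1 + Complex.I * ((ω:ℂ) / (2 * κ)) -
        Complex.I * ((Real.sqrt (m ^ 2 * D + ω ^ 2) : ℂ) / (2 * κ))))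
      (nhdsWithin 0 (Set.Ioi 0)) (nhds (Complex.Gamma (1 - Complex.I * S))) := by
    apply gamma_tendsto_aux hre_minus
    have := ((Filter.Tendsto.const_mul (Complex.I) hcont1).const_add 1).sub
      (Filter.Tendsto.const_mul (Complex.I) hcont2)
    simpa using this
  have hg6 : Filter.Tendsto (fun ω : ℝ =>
      Complex.Gamma (1 + Complex.I * ((ω:ℂ) / (2 * κ)) +
        Complex.I * ((Real.sqrt (m ^ 2 * D + ω ^ 2) : ℂ) / (2 * κ))))
      (nhdsWithin 0 (Set.Ioi 0)) (nhds (Complex.Gamma (1 + Complex.I * S))) := by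
    apply gamma_tendsto_aux hre_plus
    have := ((Filter.Tendsto.const_mul (Complex.I) hcont1).const_add 1).add
      (Filter.Tendsto.const_mul (Complex.I) hcont2)
    simpa using this
  have hexp : Filter.Tendsto (fun ω : ℝ =>
      Complex.exp (2 * Complex.I * ((ω:ℂ) / (2 * κ)) * (Real.log D : ℂ)))
      (nhdsWithin 0 (Set.Ioi 0)) (nhds 1) := by
    have : Filter.Tendsto (fun ω : ℝ => 2 * Complex.I * ((ω:ℂ) / (2 * κ)) * (Real.log D : ℂ))
        (nhdsWithin 0 (Set.Ioi 0)) (nhds 0) := by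
      have := (hcont1.const_mul (2 * Complex.I)).mul_const ((Real.log D : ℂ))
      simpa [mul_comm] using this
    simpa [Function.comp_def] using (Complex.continuous_exp.tendsto 0).comp this
  -- denominator nonzero at the limit
  have hGp : Complex.Gamma (1 + Complex.I * S) ≠ 0 := Complex.Gamma_ne_zero_of_re_pos hre_plus
  have hGm : Complex.Gamma (1 - Complex.I * S) ≠ 0 := Complex.Gamma_ne_zero_of_re_pos hre_minus
  -- modified function tendsto -1
  have hG : Filter.Tendsto (fun ω : ℝ =>
      -((Complex.Gamma (1 + 2 * Complex.I * ((ω:ℂ) / (2 * κ))) *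
          Complex.Gamma (1 - Complex.I * ((ω:ℂ) / (2 * κ)) +
            Complex.I * ((Real.sqrt (m ^ 2 * D + ω ^ 2) : ℂ) / (2 * κ))) *
          Complex.Gamma (1 - Complex.I * ((ω:ℂ) / (2 * κ)) -
            Complex.I * ((Real.sqrt (m ^ 2 * D + ω ^ 2) : ℂ) / (2 * κ)))) /
        (Complex.Gamma (1 - 2 * Complex.I * ((ω:ℂ) / (2 * κ))) *
          Complex.Gamma (1 + Complex.I * ((ω:ℂ) / (2 * κ)) -
            Complex.I * ((Real.sqrt (m ^ 2 * D + ω ^ 2) : ℂ) / (2 * κ))) *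
          Complex.Gamma (1 + Complex.I * ((ω:ℂ) / (2 * κ)) +
            Complex.I * ((Real.sqrt (m ^ 2 * D + ω ^ 2) : ℂ) / (2 * κ)))) *
        Complex.exp (2 * Complex.I * ((ω:ℂ) / (2 * κ)) * (Real.log D : ℂ))))
      (nhdsWithin 0 (Set.Ioi 0)) (nhds (-1 : ℂ)) := by
    have h := (((hg1.mul hg2).mul hg3).div ((hg4.mul hg5).mul hg6)
      (by simp [hGp, hGm])).mul hexp
    have hval : (1 * Complex.Gamma (1 + Complex.I * S) * Complex.Gamma (1 - Complex.I * S)) /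
        (1 * Complex.Gamma (1 - Complex.I * S) * Complex.Gamma (1 + Complex.I * S)) * 1
        = (1 : ℂ) := by
      rw [mul_one]
      rw [one_mul, one_mul]
      rw [mul_comm (Complex.Gamma (1 - Complex.I * S))]
      exact div_self (mul_ne_zero hGp hGm)
    rw [hval] at h
    exact h.neg
  -- now show eventual equality
  refine Filter.Tendsto.congr' ?_ hG
  filter_upwards [self_mem_nhdsWithin] with ω hω
  have hω0 : (ω : ℂ) ≠ 0 := Complex.ofReal_ne_zero.mpr (ne_of_gt hω)
  set z : ℂ := 2 * Complex.I * ((ω:ℂ) / (2 * κ)) with hz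
  have hzne : z ≠ 0 := by
    simp [hz, hω0, hκ0, Complex.I_ne_zero, div_eq_zero_iff]
  have h1 : Complex.Gamma (1 + z) = z * Complex.Gamma z := by
    rw [add_comm]; exact Complex.Gamma_add_one z hzne
  have h2 : Complex.Gamma (1 - z) = -z * Complex.Gamma (-z) := by
    rw [(by ring : (1:ℂ) - z = -z + 1)]
    exact Complex.Gamma_add_one (-z) (neg_ne_zero.mpr hzne)
  set P1 := Complex.Gamma (1 - Complex.I * ((ω:ℂ) / (2 * κ)) +
      Complex.I * ((Real.sqrt (m ^ 2 * D + ω ^ 2) : ℂ) / (2 * κ)))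
  set P2 := Complex.Gamma (1 - Complex.I * ((ω:ℂ) / (2 * κ)) -
      Complex.I * ((Real.sqrt (m ^ 2 * D + ω ^ 2) : ℂ) / (2 * κ)))
  set Q1 := Complex.Gamma (1 + Complex.I * ((ω:ℂ) / (2 * κ)) -
      Complex.I * ((Real.sqrt (m ^ 2 * D + ω ^ 2) : ℂ) / (2 * κ)))
  set Q2 := Complex.Gamma (1 + Complex.I * ((ω:ℂ) / (2 * κ)) +
      Complex.I * ((Real.sqrt (m ^ 2 * D + ω ^ 2) : ℂ) / (2 * κ)))
  set E := Complex.exp (2 * Complex.I * ((ω:ℂ) / (2 * κ)) * (Real.log D : ℂ))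
  refine Eq.symm ?_
  show (Complex.Gamma z * P1 * P2) / (Complex.Gamma (-z) * Q1 * Q2) * E
      = -((Complex.Gamma (1 + z) * P1 * P2) / (Complex.Gamma (1 - z) * Q1 * Q2) * E)
  rw [h1, h2]
  rw [(by ring : -z * Complex.Gamma (-z) * Q1 * Q2 = -(z * (Complex.Gamma (-z) * Q1 * Q2)))]
  rw [(by ring : z * Complex.Gamma z * P1 * P2 = z * (Complex.Gamma z * P1 * P2))]
  rw [div_neg, mul_div_mul_left _ _ hzne]
  ring
end
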